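/- arXiv:1206.6257 — 2 statements merged into one kernel-verified Lean document; each statement's English description precedes it below -/
import Mathlib

section
/- Existence of a locally correct path in a grid: for every function G : {0,...,m} × {0,...,n} → ℝ≥0, there exists a monotone path π from (0,0) to (m,n) such that for all indices t₁ ≤ t₂ along π, max_{t₁ ≤ t ≤ t₂} G(π(t)) equals the minimum over all monotone paths π' from π(t₁) to π(t₂) of max over nodes of π' of G. -/
def IsStep (u v : ℕ × ℕ) : Prop :=
  (v.1 = u.1 + 1 ∧ v.2 = u.2) ∨ (v.1 = u.1 ∧ v.2 = u.2 + 1) ∨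
    (v.1 = u.1 + 1 ∧ v.2 = u.2 + 1)

def IsGridPath (π : ℕ → ℕ × ℕ) (k : ℕ) (u v : ℕ × ℕ) : Prop :=
  1 ≤ k ∧ π 0 = u ∧ π (k - 1) = v ∧ ∀ i, i + 1 < k → IsStep (π i) (π (i + 1))

open Finset

/-!
Weight a value `x` of `G` by `B ^ r(x)`, where `r(x)` counts the values of `G` on the grid that
are `≤ x` and `B = m + n + 2` exceeds the number of nodes of any monotone path in the grid. Then
a single node of value `M` outweighs every path whose values are all `< M`. A monotone path of
minimum total weight is therefore locally correct: if some path between `π t₁` and `π t₂` had a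
smaller maximum than the segment of `π` between them, splicing it in would decrease the total
weight.
-/

section GridPath

variable {π ρ : ℕ → ℕ × ℕ} {k l t₁ t₂ : ℕ} {u v : ℕ × ℕ}

theorem IsStep.le (h : IsStep u v) : u ≤ v := by
  rw [Prod.le_def]
  rcases h with ⟨h₁, h₂⟩ | ⟨h₁, h₂⟩ | ⟨h₁, h₂⟩ <;> omega

theorem IsStep.fst_add_snd_lt (h : IsStep u v) : u.1 + u.2 < v.1 + v.2 := by
  rcases h with ⟨h₁, h₂⟩ | ⟨h₁, h₂⟩ | ⟨h₁, h₂⟩ <;> omega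

theorem exists_isGridPath (h : u ≤ v) : ∃ k π, IsGridPath π k u v := by
  rw [Prod.le_def] at h
  refine ⟨v.1 - u.1 + (v.2 - u.2) + 1,
    fun i => (u.1 + min i (v.1 - u.1), u.2 + (i - (v.1 - u.1))), by omega, by simp, ?_,
    fun i _ => ?_⟩
  · ext <;> simp only <;> omega
  · simp only [IsStep]
    omega

namespace IsGridPath

theorem apply_le_apply (h : IsGridPath π k u v) {i j : ℕ} (hij : i ≤ j) (hj : j < k) :
    π i ≤ π j := by
  induction j, hij using Nat.le_induction with
  | base => rfl
  | succ j _ ih => exact (ih (by omega)).trans (h.2.2.2 j hj).le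

theorem apply_le_last (h : IsGridPath π k u v) {i : ℕ} (hi : i < k) : π i ≤ v :=
  h.2.2.1 ▸ h.apply_le_apply (by omega) (by omega)

theorem length_add_le (h : IsGridPath π k u v) : k + (u.1 + u.2) ≤ v.1 + v.2 + 1 := by
  obtain ⟨hk, h₀, hlast, hstep⟩ := h
  have height : ∀ j < k, j + (u.1 + u.2) ≤ (π j).1 + (π j).2 := by
    intro j hj
    induction j with
    | zero => simp [h₀]
    | succ j ih =>
      have := (hstep j hj).fst_add_snd_lt
      have := ih (by omega)
      omega
  have := height (k - 1) (by omega)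
  rw [hlast] at this
  omega

theorem shift (h : IsGridPath π k u v) (h₁₂ : t₁ ≤ t₂) (h₂ : t₂ < k) :
    IsGridPath (fun s => π (t₁ + s)) (t₂ - t₁ + 1) (π t₁) (π t₂) :=
  ⟨by omega, rfl, by simp only; congr 1; omega, fun i hi => h.2.2.2 (t₁ + i) (by omega)⟩

end IsGridPath

def spliceSegment (π : ℕ → ℕ × ℕ) (t₁ t₂ : ℕ) (ρ : ℕ → ℕ × ℕ) (l : ℕ) : ℕ → ℕ × ℕ :=
  fun i => if i < t₁ then π i else if i < t₁ + l then ρ (i - t₁) else π (t₂ + 1 + (i - (t₁ + l)))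

theorem IsGridPath.spliceSegment (h : IsGridPath π k u v) (h₁₂ : t₁ ≤ t₂) (h₂ : t₂ < k)
    (hρ : IsGridPath ρ l (π t₁) (π t₂)) :
    IsGridPath (spliceSegment π t₁ t₂ ρ l) (t₁ + l + (k - (t₂ + 1))) u v := by
  obtain ⟨hk, h₀, hlast, hstep⟩ := h
  obtain ⟨hl, hρ₀, hρlast, hρstep⟩ := hρ
  have step : ∀ a b, b = a + 1 → b < k → IsStep (π a) (π b) := by
    rintro a _ rfl
    exact hstep a
  have ρstep : ∀ a b, b = a + 1 → b < l → IsStep (ρ a) (ρ b) := by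
    rintro a _ rfl
    exact hρstep a
  refine ⟨by omega, ?_, ?_, fun i hi => ?_⟩
  · simp only [_root_.spliceSegment]
    split_ifs
    · exact h₀
    · rw [Nat.zero_sub, hρ₀, ← h₀]
      congr
      omega
    · omega
  · simp only [_root_.spliceSegment]
    split_ifs
    · omega
    · rw [show _ - t₁ = l - 1 by omega, hρlast, ← hlast]
      congr
      omega
    · rw [← hlast]
      congr 1
      omega
  · simp only [_root_.spliceSegment]
    split_ifs
    · exact step _ _ rfl (by omega)
    · rw [show i + 1 - t₁ = 0 by omega, hρ₀]
      exact step _ _ (by omega) (by omega)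
    · omega
    · omega
    · exact ρstep _ _ (by omega) (by omega)
    · rw [show i - t₁ = l - 1 by omega, hρlast]
      exact step _ _ (by omega) (by omega)
    · omega
    · omega
    · exact step _ _ (by omega) (by omega)

def pathCost (c : ℕ × ℕ → ℕ) (π : ℕ → ℕ × ℕ) (k : ℕ) : ℕ :=
  ∑ i ∈ range k, c (π i)

variable (c : ℕ × ℕ → ℕ)

theorem pathCost_spliceSegment (π ρ : ℕ → ℕ × ℕ) (t₁ t₂ k l : ℕ) :
    pathCost c (spliceSegment π t₁ t₂ ρ l) (t₁ + l + (k - (t₂ + 1))) =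
      ∑ i ∈ range t₁, c (π i) + pathCost c ρ l + ∑ i ∈ Ico (t₂ + 1) k, c (π i) := by
  simp only [pathCost, sum_range_add, sum_Ico_eq_sum_range, spliceSegment]
  refine congr_arg₂ _ (congr_arg₂ _ (sum_congr rfl fun i hi => ?_) (sum_congr rfl fun i hi => ?_))
    (sum_congr rfl fun i _ => ?_) <;> rw [mem_range] at *
  · rw [if_pos hi]
  · rw [if_neg (by omega), if_pos (by omega), Nat.add_sub_cancel_left]
  · rw [if_neg (by omega), if_neg (by omega), Nat.add_sub_cancel_left]

theorem pathCost_eq_sum_add_sum_Icc_add_sum (h₁₂ : t₁ ≤ t₂) (h₂ : t₂ < k) :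
    pathCost c π k =
      ∑ i ∈ range t₁, c (π i) + ∑ i ∈ Icc t₁ t₂, c (π i) + ∑ i ∈ Ico (t₂ + 1) k, c (π i) := by
  simp only [pathCost, range_eq_Ico, ← Ico_add_one_right_eq_Icc]
  rw [sum_Ico_consecutive _ (Nat.zero_le t₁) (by omega : t₁ ≤ t₂ + 1),
    sum_Ico_consecutive _ (Nat.zero_le _) h₂]

theorem exists_isGridPath_pathCost_minimal (h : ∃ k π, IsGridPath π k u v) :
    ∃ k π, IsGridPath π k u v ∧
      ∀ k' π', IsGridPath π' k' u v → pathCost c π k ≤ pathCost c π' k' := by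
  classical
  have hcost : ∃ n, ∃ k π, IsGridPath π k u v ∧ pathCost c π k = n :=
    let ⟨k, π, hπ⟩ := h; ⟨_, k, π, hπ, rfl⟩
  obtain ⟨k, π, hπ, hk⟩ := Nat.find_spec hcost
  exact ⟨k, π, hπ, fun k' π' hπ' => hk ▸ Nat.find_min' hcost ⟨k', π', hπ', rfl⟩⟩

theorem IsGridPath.sum_Icc_le_pathCost_of_minimal (h : IsGridPath π k u v)
    (hmin : ∀ k' π', IsGridPath π' k' u v → pathCost c π k ≤ pathCost c π' k')
    (h₁₂ : t₁ ≤ t₂) (h₂ : t₂ < k) (hρ : IsGridPath ρ l (π t₁) (π t₂)) :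
    ∑ i ∈ Icc t₁ t₂, c (π i) ≤ pathCost c ρ l := by
  have := hmin _ _ (h.spliceSegment h₁₂ h₂ hρ)
  rw [pathCost_spliceSegment, pathCost_eq_sum_add_sum_Icc_add_sum c h₁₂ h₂] at this
  omega

end GridPath

section RankWeight

variable {α : Type*}

def rankWeight [Preorder α] [DecidableLE α] (S : Finset α) (B : ℕ) (x : α) : ℕ :=
  B ^ #{y ∈ S | y ≤ x}

section Preorder

variable [Preorder α] [DecidableLE α] {S : Finset α} {B : ℕ} {x y : α}

theorem rankWeight_pos (hB : 0 < B) : 0 < rankWeight S B x :=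
  Nat.pow_pos hB

theorem rankWeight_mono (hB : 0 < B) (hxy : x ≤ y) : rankWeight S B x ≤ rankWeight S B y :=
  Nat.pow_le_pow_right hB <| card_le_card <| monotone_filter_right S fun _ _ hz => hz.trans hxy

theorem mul_rankWeight_le_of_lt (hxy : x < y) (hy : y ∈ S) :
    B * rankWeight S B x ≤ rankWeight S B y := by
  rcases Nat.eq_zero_or_pos B with rfl | hB
  · simp
  have hcard : #{z ∈ S | z ≤ x} < #{z ∈ S | z ≤ y} := by
    refine card_lt_card ⟨monotone_filter_right S fun _ _ hz => hz.trans hxy.le, fun hsub => ?_⟩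
    exact hxy.not_ge (mem_filter.1 (hsub (mem_filter.2 ⟨hy, le_rfl⟩))).2
  rw [rankWeight, rankWeight, ← pow_succ']
  exact Nat.pow_le_pow_right hB hcard

end Preorder

theorem sup_le_sup_of_sum_rankWeight_le {ι : Type*} [LinearOrder α] [OrderBot α] {S : Finset α}
    {B : ℕ} {s t : Finset ι} {f g : ι → α} (ht : #t < B) (hfS : ∀ i ∈ s, f i ∈ S)
    (h : ∑ i ∈ s, rankWeight S B (f i) ≤ ∑ i ∈ t, rankWeight S B (g i)) :
    s.sup f ≤ t.sup g := by
  by_contra! hlt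
  have hB : 0 < B := by omega
  obtain ⟨i, hi, hfi⟩ := exists_mem_eq_sup s (nonempty_of_ne_empty fun hs => by simp [hs] at hlt) f
  have hsum_t : ∑ j ∈ t, rankWeight S B (g j) ≤ #t * rankWeight S B (t.sup g) := by
    simpa using sum_le_card_nsmul t _ _ fun j hj => rankWeight_mono hB (le_sup hj)
  have hmax : B * rankWeight S B (t.sup g) ≤ rankWeight S B (f i) :=
    mul_rankWeight_le_of_lt (hfi ▸ hlt) (hfS i hi)
  have hsum_s : rankWeight S B (f i) ≤ ∑ j ∈ s, rankWeight S B (f j) :=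
    single_le_sum (f := fun j => rankWeight S B (f j)) (fun _ _ => Nat.zero_le _) hi
  have := Nat.mul_lt_mul_of_pos_right ht (rankWeight_pos (S := S) (x := t.sup g) hB)
  omega

end RankWeight

theorem exists_locally_correct_grid_path (m n : ℕ) (G : ℕ × ℕ → NNReal) :
    ∃ (k : ℕ) (π : ℕ → ℕ × ℕ), IsGridPath π k (0, 0) (m, n) ∧
      ∀ t₁ t₂ : ℕ, t₁ ≤ t₂ → t₂ < k →
        IsLeast {r : NNReal | ∃ (k' : ℕ) (π' : ℕ → ℕ × ℕ),
            IsGridPath π' k' (π t₁) (π t₂) ∧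
            r = Finset.sup (Finset.Icc 0 (k' - 1)) (fun s => G (π' s))}
          (Finset.sup (Finset.Icc t₁ t₂) (fun t => G (π t))) := by
  let S := (Iic (m, n)).image G
  obtain ⟨k, π, hπ, hmin⟩ := exists_isGridPath_pathCost_minimal
    (fun p => rankWeight S (m + n + 2) (G p)) (exists_isGridPath zero_le)
  refine ⟨k, π, hπ, fun t₁ t₂ h₁₂ h₂ => ⟨⟨_, _, hπ.shift h₁₂ h₂, ?_⟩, ?_⟩⟩
  · have hIcc : Icc t₁ t₂ = (Icc 0 (t₂ - t₁)).image (t₁ + ·) := by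
      rw [image_add_left_Icc, add_zero, Nat.add_sub_cancel' h₁₂]
    rw [Nat.add_sub_cancel, hIcc, sup_image]
    rfl
  · rintro _ ⟨l, ρ, hρ, rfl⟩
    have hl := hρ.length_add_le
    have hbox := Prod.le_def.1 (hπ.apply_le_last h₂)
    refine sup_le_sup_of_sum_rankWeight_le (B := m + n + 2) (by rw [Nat.card_Icc]; omega)
      (fun i hi => mem_image_of_mem G (mem_Iic.2 (hπ.apply_le_last (by rw [mem_Icc] at hi; omega)))) ?_
    rw [← Nat.range_eq_Icc_zero_sub_one _ (by have := hρ.1; omega)]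
    exact hπ.sum_Icc_le_pathCost_of_minimal _ hmin h₁₂ h₂ hρ
end

section
/- The discrete Fréchet distance is at least the Fréchet distance of the corresponding polygonal curves, and at most the Fréchet distance plus the maximum edge length: δ_F(P,Q) ≤ dF_discrete ≤ δ_F(P,Q) + max edge length of P and Q, where P and Q are the polygonal curves through p₀,...,p_m and q₀,...,q_n. -/
open Set
open scoped NNReal

def IsReparamTo (a b : ℝ) (σ : ℝ → ℝ) : Prop :=
  ContinuousOn σ (Set.Icc 0 1) ∧ MonotoneOn σ (Set.Icc 0 1) ∧ σ 0 = a ∧ σ 1 = b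

noncomputable def frechetDist {d : ℕ} (P Q : ℝ → EuclideanSpace ℝ (Fin d))
    (a b c e : ℝ) : ℝ :=
  sInf {r | ∃ σ θ : ℝ → ℝ, IsReparamTo a b σ ∧ IsReparamTo c e θ ∧
    r = ⨆ t : Set.Icc (0:ℝ) 1, dist (P (σ t)) (Q (θ t))}

/-! ### Auxiliary convexity lemmas -/

lemma seg_dist_le {E : Type*} [NormedAddCommGroup E] [NormedSpace ℝ E]
    (a b c e : E) {l : ℝ} (h0 : 0 ≤ l) (h1 : l ≤ 1) :
    dist ((1-l) • a + l • b) ((1-l) • c + l • e) ≤ max (dist a c) (dist b e) := by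
  have key : ((1-l) • a + l • b) - ((1-l) • c + l • e) = (1-l) • (a - c) + l • (b - e) := by
    module
  rw [dist_eq_norm, key]
  calc ‖(1-l) • (a - c) + l • (b - e)‖ ≤ ‖(1-l) • (a - c)‖ + ‖l • (b - e)‖ := norm_add_le _ _
    _ = (1-l) * ‖a - c‖ + l * ‖b - e‖ := by
        rw [norm_smul, norm_smul, Real.norm_of_nonneg (by linarith), Real.norm_of_nonneg h0]
    _ ≤ (1-l) * max (dist a c) (dist b e) + l * max (dist a c) (dist b e) := by
        rw [← dist_eq_norm, ← dist_eq_norm]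
        have h2 := le_max_left (dist a c) (dist b e)
        have h3 := le_max_right (dist a c) (dist b e)
        nlinarith
    _ = max (dist a c) (dist b e) := by ring

lemma seg_dist_le' {E : Type*} [NormedAddCommGroup E] [NormedSpace ℝ E]
    (a b c : E) {l : ℝ} (h0 : 0 ≤ l) (h1 : l ≤ 1) :
    dist ((1-l) • a + l • b) c ≤ max (dist a c) (dist b c) := by
  have : c = (1-l) • c + l • c := by module
  nth_rewrite 1 [this]
  exact seg_dist_le a b c c h0 h1

lemma seg_dist_le'' {E : Type*} [NormedAddCommGroup E] [NormedSpace ℝ E]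
    (a b c : E) {l : ℝ} (h0 : 0 ≤ l) (h1 : l ≤ 1) :
    dist c ((1-l) • a + l • b) ≤ max (dist c a) (dist c b) := by
  rw [dist_comm, dist_comm c a, dist_comm c b]
  exact seg_dist_le' a b c h0 h1

/-! ### Piecewise linear interpolation -/

noncomputable def plin (g : ℕ → ℝ) (x : ℝ) : ℝ :=
  g ⌊x⌋₊ + (x - ⌊x⌋₊) * (g (⌊x⌋₊ + 1) - g ⌊x⌋₊)

lemma plin_nat (g : ℕ → ℝ) (i : ℕ) : plin g i = g i := by
  simp [plin]

section
variable {g : ℕ → ℝ} (hg1 : ∀ i, g i ≤ g (i+1)) (hg2 : ∀ i, g (i+1) ≤ g i + 1)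

include hg1 in
lemma g_mono : Monotone g := monotone_nat_of_le_succ hg1

include hg2 in
omit hg1 in
lemma g_step_sum : ∀ a b : ℕ, a ≤ b → g b ≤ g a + ((b : ℝ) - a) := by
  intro a b hab
  induction b with
  | zero => simp_all
  | succ k ih =>
    rcases Nat.lt_or_ge a (k+1) with h | h
    · have := ih (by omega)
      have := hg2 k
      push_cast
      linarith
    · have : a = k + 1 := by omega
      subst this
      simp

include hg1 hg2 in
lemma plin_bounds {x y : ℝ} (h0 : 0 ≤ x) (hxy : x ≤ y) :
    plin g x ≤ plin g y ∧ plin g y ≤ plin g x + (y - x) := by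
  have h0y : (0:ℝ) ≤ y := le_trans h0 hxy
  set i := ⌊x⌋₊ with hi
  set j := ⌊y⌋₊ with hj
  have hij : i ≤ j := Nat.floor_mono hxy
  have hix : (i:ℝ) ≤ x := Nat.floor_le h0
  have hxi : x < i + 1 := Nat.lt_floor_add_one x
  have hjy : (j:ℝ) ≤ y := Nat.floor_le h0y
  have hyj : y < j + 1 := Nat.lt_floor_add_one y
  have hinc_i0 : 0 ≤ g (i+1) - g i := by linarith [hg1 i]
  have hinc_i1 : g (i+1) - g i ≤ 1 := by linarith [hg2 i]
  have hinc_j0 : 0 ≤ g (j+1) - g j := by linarith [hg1 j]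
  have hinc_j1 : g (j+1) - g j ≤ 1 := by linarith [hg2 j]
  rcases eq_or_lt_of_le hij with he | hlt
  · rw [plin, plin, ← hi, ← hj, ← he]
    constructor
    · nlinarith
    · nlinarith
  · have h1 : (i:ℝ) + 1 ≤ j := by exact_mod_cast Nat.succ_le_of_lt hlt
    have hgj : g j ≤ g (i+1) + ((j:ℝ) - (i+1)) := by
      have := g_step_sum hg2 (i+1) j (by omega)
      push_cast at this ⊢
      linarith
    have hmono : g (i+1) ≤ g j := g_mono hg1 (by omega)
    rw [plin, plin, ← hi, ← hj]
    constructor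
    · nlinarith
    · nlinarith

include hg1 hg2 in
lemma plin_reparam (N : ℕ) (a b : ℝ) (h0 : g 0 = a) (hN : g N = b) :
    IsReparamTo a b (fun t : ℝ => plin g (t * N)) := by
  have hN0 : (0:ℝ) ≤ N := Nat.cast_nonneg N
  have key : ∀ x ∈ Icc (0:ℝ) 1, ∀ y ∈ Icc (0:ℝ) 1, x ≤ y →
      dist (plin g (x * N)) (plin g (y * N)) ≤ (N:ℝ) * dist x y := by
    intro x hx y hy hxy
    have hb := plin_bounds hg1 hg2 (mul_nonneg hx.1 hN0)
      (mul_le_mul_of_nonneg_right hxy hN0)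
    rw [Real.dist_eq, Real.dist_eq, abs_of_nonpos (by linarith [hb.1]),
      abs_of_nonpos (by linarith)]
    nlinarith [hb.2]
  refine ⟨?_, ?_, ?_, ?_⟩
  · apply LipschitzOnWith.continuousOn (K := (N : ℝ≥0))
    apply LipschitzOnWith.of_dist_le_mul
    intro x hx y hy
    rcases le_total x y with h | h
    · simpa using key x hx y hy h
    · rw [dist_comm, dist_comm x y]
      simpa using key y hy x hx h
  · intro x hx y hy hxy
    exact (plin_bounds hg1 hg2 (mul_nonneg hx.1 hN0)
      (mul_le_mul_of_nonneg_right hxy hN0)).1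
  · show plin g (0 * N) = a
    rw [zero_mul, show (0:ℝ) = ((0:ℕ):ℝ) by norm_num, plin_nat, h0]
  · show plin g (1 * N) = b
    rw [one_mul, show ((N:ℝ)) = ((N:ℕ):ℝ) from rfl, plin_nat, hN]
end

/-! ### Grid path construction -/

open scoped Classical in
noncomputable def gridStep (m n : ℕ) (s u : ℕ → ℝ) (ij : ℕ × ℕ) : ℕ × ℕ :=
  if ij.1 < m ∧ (n ≤ ij.2 ∨ s (ij.1+1) ≤ u (ij.2+1)) then (ij.1+1, ij.2) else (ij.1, ij.2+1)

noncomputable def gridSeq (m n : ℕ) (s u : ℕ → ℝ) : ℕ → ℕ × ℕ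
  | 0 => (0,0)
  | l+1 => gridStep m n s u (gridSeq m n s u l)

lemma gridSeq_spec (m n : ℕ) (s u : ℕ → ℝ) (hs : Monotone s) (hu : Monotone u)
    (h01 : s 0 ≤ u 1) (h10 : u 0 ≤ s 1) :
    ∀ l, l ≤ m + n →
      (gridSeq m n s u l).1 + (gridSeq m n s u l).2 = l ∧
      (gridSeq m n s u l).1 ≤ m ∧ (gridSeq m n s u l).2 ≤ n ∧
      ((gridSeq m n s u l).2 < n → s (gridSeq m n s u l).1 ≤ u ((gridSeq m n s u l).2 + 1)) ∧
      ((gridSeq m n s u l).1 < m → u (gridSeq m n s u l).2 ≤ s ((gridSeq m n s u l).1 + 1)) := by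
  intro l
  induction l with
  | zero => intro _; exact ⟨rfl, Nat.zero_le _, Nat.zero_le _, fun _ => h01, fun _ => h10⟩
  | succ l ih =>
    intro hl
    obtain ⟨hsum, him, hjn, hinv1, hinv2⟩ := ih (by omega)
    set ij := gridSeq m n s u l with hij
    have hnext : gridSeq m n s u (l+1) = gridStep m n s u ij := rfl
    by_cases hc : ij.1 < m ∧ (n ≤ ij.2 ∨ s (ij.1+1) ≤ u (ij.2+1))
    · rw [hnext, gridStep, if_pos hc]
      refine ⟨by simp; omega, by simp; omega, by simpa using hjn, ?_, ?_⟩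
      · intro hjn'
        simp only at hjn' ⊢
        rcases hc.2 with h | h
        · omega
        · exact h
      · intro hi'
        simp only at hi' ⊢
        exact le_trans (hinv2 hc.1) (hs (by omega))
    · rw [hnext, gridStep, if_neg hc]
      push_neg at hc
      have hjlt : ij.2 < n := by
        by_contra hge
        have h1 : ij.1 = m ∨ ij.1 < m := by omega
        rcases h1 with h1 | h1
        · omega
        · have := hc h1
          omega
      refine ⟨by simp; omega, by simpa using him, by simp; omega, ?_, ?_⟩
      · intro _
        simp only
        exact le_trans (hinv1 hjlt) (hu (by omega))
      · intro hi'
        simp only at hi' ⊢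
        have := (hc hi').2
        linarith

lemma gridSeq_isGridPath (m n : ℕ) (s u : ℕ → ℝ) (hs : Monotone s) (hu : Monotone u)
    (h01 : s 0 ≤ u 1) (h10 : u 0 ≤ s 1) :
    IsGridPath (gridSeq m n s u) (m + n + 1) (0,0) (m,n) := by
  refine ⟨by omega, rfl, ?_, ?_⟩
  · have := gridSeq_spec m n s u hs hu h01 h10 (m+n) le_rfl
    have h1 : m + n + 1 - 1 = m + n := by omega
    rw [h1]
    have : (gridSeq m n s u (m+n)).1 = m ∧ (gridSeq m n s u (m+n)).2 = n := by omega
    exact Prod.ext this.1 this.2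
  · intro i _
    show IsStep _ (gridStep m n s u (gridSeq m n s u i))
    unfold gridStep
    split
    · left; exact ⟨rfl, rfl⟩
    · right; left; exact ⟨rfl, rfl⟩

lemma trivPath_isGridPath (m n : ℕ) :
    IsGridPath (fun l => (min l m, l - min l m)) (m + n + 1) (0,0) (m,n) := by
  refine ⟨by omega, by simp, ?_, ?_⟩
  · have h1 : m + n + 1 - 1 = m + n := by omega
    rw [h1]
    simp only
    have : min (m+n) m = m := by omega
    rw [this]
    simp
  · intro i hi
    rcases Nat.lt_or_ge i m with h | h
    · left
      constructor <;> simp <;> omega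
    · right; left
      constructor <;> simp <;> omega

/-! ### Curve evaluation lemmas -/

section curve
variable {E : Type*} [NormedAddCommGroup E] [NormedSpace ℝ E]
variable {m : ℕ} {p : ℕ → E} {P : ℝ → E}

lemma eval_int (hP0 : P 0 = p 0)
    (hP : ∀ i : ℕ, i < m → ∀ l ∈ Set.Icc (0:ℝ) 1, P (i + l) = (1 - l) • p i + l • p (i + 1)) :
    ∀ i : ℕ, i ≤ m → P i = p i := by
  intro i hi
  cases i with
  | zero => simpa using hP0
  | succ j =>
    have := hP j (by omega) 1 ⟨zero_le_one, le_refl 1⟩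
    simp at this
    rw [show ((j+1 : ℕ) : ℝ) = (j : ℝ) + 1 by push_cast; ring]
    exact this

lemma eval_seg (hP0 : P 0 = p 0)
    (hP : ∀ i : ℕ, i < m → ∀ l ∈ Set.Icc (0:ℝ) 1, P (i + l) = (1 - l) • p i + l • p (i + 1))
    (x : ℝ) (hx0 : 0 ≤ x) (hxm : x ≤ m) :
    ∃ i j : ℕ, i ≤ m ∧ j ≤ m ∧ ∃ l : ℝ, 0 ≤ l ∧ l ≤ 1 ∧ P x = (1-l) • p i + l • p j := by
  set i := ⌊x⌋₊ with hi
  have hix : (i:ℝ) ≤ x := Nat.floor_le hx0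
  have hxi : x < i + 1 := Nat.lt_floor_add_one x
  rcases Nat.lt_or_ge i m with h | h
  · refine ⟨i, i+1, by omega, by omega, x - i, by linarith, by linarith, ?_⟩
    have := hP i h (x - i) ⟨by linarith, by linarith⟩
    rw [show (i:ℝ) + (x - i) = x by ring] at this
    exact this
  · have hxm' : x = m := by
      have : (m:ℝ) ≤ i := by exact_mod_cast h
      linarith
    refine ⟨m, m, le_rfl, le_rfl, 0, le_rfl, zero_le_one, ?_⟩
    rw [hxm', eval_int hP0 hP m le_rfl]
    module

lemma eval_near (hP0 : P 0 = p 0)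
    (hP : ∀ i : ℕ, i < m → ∀ l ∈ Set.Icc (0:ℝ) 1, P (i + l) = (1 - l) • p i + l • p (i + 1))
    {i : ℕ} (him : i ≤ m) {x : ℝ} (hx1 : (i:ℝ) ≤ x) (hx2 : x ≤ i + 1) (hxm : x ≤ m) :
    dist (P x) (p i) ≤ ((Finset.sup (Finset.range m) fun k => nndist (p k) (p (k+1))) : NNReal) := by
  rcases Nat.lt_or_ge i m with h | h
  · set l := x - i with hl
    have := hP i h l ⟨by linarith, by linarith⟩
    rw [show (i:ℝ) + l = x by ring] at this
    rw [this]
    have key : (1-l) • p i + l • p (i+1) - p i = l • (p (i+1) - p i) := by module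
    rw [dist_eq_norm, key, norm_smul, Real.norm_of_nonneg (by linarith)]
    calc l * ‖p (i+1) - p i‖ ≤ ‖p (i+1) - p i‖ :=
          mul_le_of_le_one_left (norm_nonneg _) (by linarith)
      _ = dist (p i) (p (i+1)) := by rw [dist_comm, dist_eq_norm]
      _ = ((nndist (p i) (p (i+1)) : NNReal) : ℝ) := by rw [dist_nndist]
      _ ≤ _ := NNReal.coe_le_coe.mpr
          (Finset.le_sup (f := fun k => nndist (p k) (p (k+1))) (Finset.mem_range.mpr h))
  · have him' : i = m := by omega
    subst him'
    have hx : x = (i:ℝ) := le_antisymm hxm hx1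
    rw [hx, eval_int hP0 hP i le_rfl]
    simp
end curve

/-! ### Part 1 core -/

lemma part1_core {d : ℕ} {m n : ℕ} {p q : ℕ → EuclideanSpace ℝ (Fin d)}
    {P Q : ℝ → EuclideanSpace ℝ (Fin d)}
    (hP0 : P 0 = p 0) (hQ0 : Q 0 = q 0)
    (hP : ∀ i : ℕ, i < m → ∀ l ∈ Set.Icc (0:ℝ) 1,
      P (i + l) = (1 - l) • p i + l • p (i + 1))
    (hQ : ∀ j : ℕ, j < n → ∀ l ∈ Set.Icc (0:ℝ) 1,
      Q (j + l) = (1 - l) • q j + l • q (j + 1))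
    (k : ℕ) (π : ℕ → ℕ × ℕ) (hpath : IsGridPath π k (0, 0) (m, n)) :
    ∃ σ θ : ℝ → ℝ, IsReparamTo 0 m σ ∧ IsReparamTo 0 n θ ∧
      (⨆ t : Set.Icc (0:ℝ) 1, dist (P (σ t)) (Q (θ t))) ≤
        ((Finset.sup (Finset.Icc 0 (k - 1)) fun t => nndist (p (π t).1) (q (π t).2) : NNReal) : ℝ) := by
  obtain ⟨hk1, hπ0, hπN, hstepk⟩ := hpath
  set N := k - 1 with hNdef
  have hkN : k = N + 1 := by omega
  have hπN' : π N = (m, n) := hπN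
  have hstep' : ∀ i, i < N → IsStep (π i) (π (i+1)) := fun i hi => hstepk i (by omega)
  have hmono : ∀ a b : ℕ, a ≤ b → b ≤ N → (π a).1 ≤ (π b).1 ∧ (π a).2 ≤ (π b).2 := by
    intro a b hab
    induction b, hab using Nat.le_induction with
    | base => intro _; exact ⟨le_rfl, le_rfl⟩
    | succ b hab ih =>
      intro hbN
      have h1 := ih (by omega)
      have h2 := hstep' b (by omega)
      rcases h2 with ⟨e1, e2⟩ | ⟨e1, e2⟩ | ⟨e1, e2⟩ <;> exact ⟨by omega, by omega⟩
  have hcoord : ∀ l, l ≤ N → (π l).1 ≤ m ∧ (π l).2 ≤ n := by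
    intro l hl
    have h := hmono l N hl le_rfl
    rw [hπN'] at h
    exact h
  have hgx12 : ∀ i, (((π (min i N)).1 : ℝ) ≤ ((π (min (i+1) N)).1 : ℝ)) ∧
      (((π (min (i+1) N)).1 : ℝ) ≤ ((π (min i N)).1 : ℝ) + 1) := by
    intro i
    rcases Nat.lt_or_ge i N with h | h
    · rw [min_eq_left (by omega : i ≤ N), min_eq_left (by omega : i + 1 ≤ N)]
      rcases hstep' i h with ⟨e1, _⟩ | ⟨e1, _⟩ | ⟨e1, _⟩ <;>
        (rw [e1]; push_cast; exact ⟨by linarith, by linarith⟩)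
    · rw [min_eq_right (by omega : N ≤ i), min_eq_right (by omega : N ≤ i + 1)]
      constructor <;> linarith
  have hgy12 : ∀ i, (((π (min i N)).2 : ℝ) ≤ ((π (min (i+1) N)).2 : ℝ)) ∧
      (((π (min (i+1) N)).2 : ℝ) ≤ ((π (min i N)).2 : ℝ) + 1) := by
    intro i
    rcases Nat.lt_or_ge i N with h | h
    · rw [min_eq_left (by omega : i ≤ N), min_eq_left (by omega : i + 1 ≤ N)]
      rcases hstep' i h with ⟨_, e2⟩ | ⟨_, e2⟩ | ⟨_, e2⟩ <;>
        (rw [e2]; push_cast; exact ⟨by linarith, by linarith⟩)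
    · rw [min_eq_right (by omega : N ≤ i), min_eq_right (by omega : N ≤ i + 1)]
      constructor <;> linarith
  have hrepσ : IsReparamTo 0 m (fun t : ℝ => plin (fun i => ((π (min i N)).1 : ℝ)) (t * N)) :=
    plin_reparam (fun i => (hgx12 i).1) (fun i => (hgx12 i).2) N 0 m
      (by simp [hπ0]) (by simp [hπN'])
  have hrepθ : IsReparamTo 0 n (fun t : ℝ => plin (fun i => ((π (min i N)).2 : ℝ)) (t * N)) :=
    plin_reparam (fun i => (hgy12 i).1) (fun i => (hgy12 i).2) N 0 n
      (by simp [hπ0]) (by simp [hπN'])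
  refine ⟨_, _, hrepσ, hrepθ, ?_⟩
  have hcorner : ∀ j, j ≤ N → dist (p (π j).1) (q (π j).2) ≤
      ((Finset.sup (Finset.Icc 0 (k - 1)) fun t => nndist (p (π t).1) (q (π t).2) : NNReal) : ℝ) := by
    intro j hj
    rw [dist_nndist]
    exact NNReal.coe_le_coe.mpr (Finset.le_sup (f := fun t => nndist (p (π t).1) (q (π t).2))
      (Finset.mem_Icc.mpr ⟨Nat.zero_le _, by omega⟩))
  apply Real.iSup_le _ (NNReal.coe_nonneg _)
  rintro ⟨t, ht⟩
  show dist (P (plin (fun i => ((π (min i N)).1 : ℝ)) (t * N)))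
      (Q (plin (fun i => ((π (min i N)).2 : ℝ)) (t * N))) ≤ _
  set s := t * (N:ℝ) with hsdef
  have hs0 : 0 ≤ s := mul_nonneg ht.1 (Nat.cast_nonneg N)
  have hsN : s ≤ N := by
    rw [hsdef]
    exact mul_le_of_le_one_left (Nat.cast_nonneg N) ht.2
  set i := ⌊s⌋₊ with hidef
  have his : (i:ℝ) ≤ s := Nat.floor_le hs0
  rcases Nat.lt_or_ge i N with hiN | hiN
  · have hsi : s < i + 1 := Nat.lt_floor_add_one s
    set l := s - i with hldef
    have hl0 : 0 ≤ l := by linarith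
    have hl1 : l ≤ 1 := by linarith
    have hσt : plin (fun i => ((π (min i N)).1 : ℝ)) s
        = ((π i).1 : ℝ) + l * (((π (i+1)).1 : ℝ) - ((π i).1 : ℝ)) := by
      rw [plin, ← hidef, ← hldef]
      simp only [min_eq_left (show i ≤ N by omega), min_eq_left (show i + 1 ≤ N by omega)]
    have hθt : plin (fun i => ((π (min i N)).2 : ℝ)) s
        = ((π i).2 : ℝ) + l * (((π (i+1)).2 : ℝ) - ((π i).2 : ℝ)) := by
      rw [plin, ← hidef, ← hldef]
      simp only [min_eq_left (show i ≤ N by omega), min_eq_left (show i + 1 ≤ N by omega)]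
    have hc1 := hcoord i (by omega)
    have hc2 := hcoord (i+1) (by omega)
    rcases hstep' i hiN with ⟨e1, e2⟩ | ⟨e1, e2⟩ | ⟨e1, e2⟩
    · -- right step
      have ha : plin (fun i => ((π (min i N)).1 : ℝ)) s = ((π i).1 : ℝ) + l := by
        rw [hσt, e1]; push_cast; ring
      have hb : plin (fun i => ((π (min i N)).2 : ℝ)) s = ((π i).2 : ℝ) := by
        rw [hθt, e2]; ring
      have him : (π i).1 < m := by
        have := hc2.1; omega
      rw [ha, hb, hP (π i).1 him l ⟨hl0, hl1⟩, eval_int hQ0 hQ (π i).2 hc1.2]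
      refine le_trans (seg_dist_le' _ _ _ hl0 hl1) (max_le (hcorner i (by omega)) ?_)
      have h := hcorner (i+1) (by omega)
      rw [e1, e2] at h
      exact h
    · -- up step
      have ha : plin (fun i => ((π (min i N)).1 : ℝ)) s = ((π i).1 : ℝ) := by
        rw [hσt, e1]; ring
      have hb : plin (fun i => ((π (min i N)).2 : ℝ)) s = ((π i).2 : ℝ) + l := by
        rw [hθt, e2]; push_cast; ring
      have hjn : (π i).2 < n := by
        have := hc2.2; omega
      rw [ha, hb, hQ (π i).2 hjn l ⟨hl0, hl1⟩, eval_int hP0 hP (π i).1 hc1.1]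
      refine le_trans (seg_dist_le'' _ _ _ hl0 hl1) (max_le (hcorner i (by omega)) ?_)
      have h := hcorner (i+1) (by omega)
      rw [e1, e2] at h
      exact h
    · -- diagonal step
      have ha : plin (fun i => ((π (min i N)).1 : ℝ)) s = ((π i).1 : ℝ) + l := by
        rw [hσt, e1]; push_cast; ring
      have hb : plin (fun i => ((π (min i N)).2 : ℝ)) s = ((π i).2 : ℝ) + l := by
        rw [hθt, e2]; push_cast; ring
      have him : (π i).1 < m := by
        have := hc2.1; omega
      have hjn : (π i).2 < n := by
        have := hc2.2; omega
      rw [ha, hb, hP (π i).1 him l ⟨hl0, hl1⟩, hQ (π i).2 hjn l ⟨hl0, hl1⟩]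
      refine le_trans (seg_dist_le _ _ _ _ hl0 hl1) (max_le (hcorner i (by omega)) ?_)
      have h := hcorner (i+1) (by omega)
      rw [e1, e2] at h
      exact h
  · have hsN' : s = (N:ℝ) := by
      have h1 : (N:ℝ) ≤ (i:ℝ) := by exact_mod_cast hiN
      linarith
    have hσt : plin (fun i => ((π (min i N)).1 : ℝ)) s = (m : ℝ) := by
      rw [hsN', show ((N:ℝ)) = ((N:ℕ):ℝ) from rfl, plin_nat]
      simp [hπN']
    have hθt : plin (fun i => ((π (min i N)).2 : ℝ)) s = (n : ℝ) := by
      rw [hsN', show ((N:ℝ)) = ((N:ℕ):ℝ) from rfl, plin_nat]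
      simp [hπN']
    rw [hσt, hθt, eval_int hP0 hP m le_rfl, eval_int hQ0 hQ n le_rfl]
    have h := hcorner N le_rfl
    rw [hπN'] at h
    exact h

/-! ### Part 2 core -/

lemma reparam_hits (σ : ℝ → ℝ) (a b : ℝ) (h : IsReparamTo a b σ) (v : ℝ) (hv : v ∈ Icc a b) :
    sInf {t | t ∈ Icc (0:ℝ) 1 ∧ σ t = v} ∈ {t | t ∈ Icc (0:ℝ) 1 ∧ σ t = v} := by
  obtain ⟨hc, hm, h0, h1⟩ := h
  have hne : {t | t ∈ Icc (0:ℝ) 1 ∧ σ t = v}.Nonempty := by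
    have h2 := intermediate_value_Icc zero_le_one hc
    rw [h0, h1] at h2
    obtain ⟨t, ht, hσt⟩ := h2 hv
    exact ⟨t, ht, hσt⟩
  have hcl : IsClosed {t | t ∈ Icc (0:ℝ) 1 ∧ σ t = v} := by
    have he : {t | t ∈ Icc (0:ℝ) 1 ∧ σ t = v} = Icc 0 1 ∩ σ ⁻¹' {v} := by
      ext t; simp [Set.mem_inter_iff]
    rw [he]
    exact hc.preimage_isClosed_of_isClosed isClosed_Icc isClosed_singleton
  exact hcl.csInf_mem hne ⟨0, fun t ht => ht.1.1⟩

lemma part2_core {d : ℕ} {m n : ℕ} {p q : ℕ → EuclideanSpace ℝ (Fin d)}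
    {P Q : ℝ → EuclideanSpace ℝ (Fin d)}
    (hP0 : P 0 = p 0) (hQ0 : Q 0 = q 0)
    (hP : ∀ i : ℕ, i < m → ∀ l ∈ Set.Icc (0:ℝ) 1,
      P (i + l) = (1 - l) • p i + l • p (i + 1))
    (hQ : ∀ j : ℕ, j < n → ∀ l ∈ Set.Icc (0:ℝ) 1,
      Q (j + l) = (1 - l) • q j + l • q (j + 1))
    (σ θ : ℝ → ℝ) (hσ : IsReparamTo 0 m σ) (hθ : IsReparamTo 0 n θ) :
    sInf {r : ℝ | ∃ (k : ℕ) (π : ℕ → ℕ × ℕ),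
        IsGridPath π k (0, 0) (m, n) ∧
        r = (Finset.sup (Finset.Icc 0 (k - 1))
              (fun t => nndist (p (π t).1) (q (π t).2)) : NNReal)} ≤
      (⨆ t : Set.Icc (0:ℝ) 1, dist (P (σ t)) (Q (θ t))) +
        ((max (Finset.sup (Finset.range m) (fun i => nndist (p i) (p (i + 1))))
             (Finset.sup (Finset.range n) (fun j => nndist (q j) (q (j + 1)))) : NNReal) : ℝ) := by
  obtain ⟨hσc, hσm, hσ0, hσ1⟩ := hσ
  obtain ⟨hθc, hθm, hθ0, hθ1⟩ := hθ
  set C : ℝ := ((max (Finset.sup (Finset.range m) (fun i => nndist (p i) (p (i + 1))))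
      (Finset.sup (Finset.range n) (fun j => nndist (q j) (q (j + 1)))) : NNReal) : ℝ) with hCdef
  set r : ℝ := ⨆ t : Set.Icc (0:ℝ) 1, dist (P (σ t)) (Q (θ t)) with hrdef
  have hC0 : 0 ≤ C := NNReal.coe_nonneg _
  have hσrange : ∀ t ∈ Icc (0:ℝ) 1, σ t ∈ Icc (0:ℝ) (m:ℝ) := by
    intro t ht
    constructor
    · have h := hσm (left_mem_Icc.mpr zero_le_one) ht ht.1
      rwa [hσ0] at h
    · have h := hσm ht (right_mem_Icc.mpr zero_le_one) ht.2
      rwa [hσ1] at h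
  have hθrange : ∀ t ∈ Icc (0:ℝ) 1, θ t ∈ Icc (0:ℝ) (n:ℝ) := by
    intro t ht
    constructor
    · have h := hθm (left_mem_Icc.mpr zero_le_one) ht ht.1
      rwa [hθ0] at h
    · have h := hθm ht (right_mem_Icc.mpr zero_le_one) ht.2
      rwa [hθ1] at h
  have corner : ∀ x ≤ m, ∀ y ≤ n, dist (p x) (q y) ≤
      ((Finset.sup (Finset.Icc 0 m) fun a => Finset.sup (Finset.Icc 0 n)
        fun b => nndist (p a) (q b) : NNReal) : ℝ) := by
    intro x hx y hy
    rw [dist_nndist]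
    refine NNReal.coe_le_coe.mpr (le_trans
      (Finset.le_sup (f := fun b => nndist (p x) (q b)) (Finset.mem_Icc.mpr ⟨Nat.zero_le _, hy⟩)) ?_)
    exact Finset.le_sup (f := fun a => Finset.sup (Finset.Icc 0 n) fun b => nndist (p a) (q b))
      (Finset.mem_Icc.mpr ⟨Nat.zero_le _, hx⟩)
  have hD : ∀ t : Icc (0:ℝ) 1, dist (P (σ t)) (Q (θ t)) ≤
      ((Finset.sup (Finset.Icc 0 m) fun a => Finset.sup (Finset.Icc 0 n)
        fun b => nndist (p a) (q b) : NNReal) : ℝ) := by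
    intro t
    obtain ⟨i, j, him, hjm, l, hl0, hl1, hPx⟩ :=
      eval_seg hP0 hP (σ t) (hσrange t t.2).1 (hσrange t t.2).2
    obtain ⟨a, b, han, hbn, l', hl0', hl1', hQy⟩ :=
      eval_seg hQ0 hQ (θ t) (hθrange t t.2).1 (hθrange t t.2).2
    rw [hPx, hQy]
    refine le_trans (seg_dist_le' _ _ _ hl0 hl1) (max_le ?_ ?_) <;>
      exact le_trans (seg_dist_le'' _ _ _ hl0' hl1')
        (max_le (corner _ (by omega) _ (by omega)) (corner _ (by omega) _ (by omega)))
  have hbdd : BddAbove (range fun t : Icc (0:ℝ) 1 => dist (P (σ t)) (Q (θ t))) :=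
    ⟨_, by rintro _ ⟨t, rfl⟩; exact hD t⟩
  have hler : ∀ t : Icc (0:ℝ) 1, dist (P (σ t)) (Q (θ t)) ≤ r := fun t => le_ciSup hbdd t
  have hr0 : 0 ≤ r := Real.iSup_nonneg (fun t => dist_nonneg)
  set S : ℕ → ℝ := fun i => sInf {t | t ∈ Icc (0:ℝ) 1 ∧ σ t = ((min i m : ℕ) : ℝ)} with hSdef
  set U : ℕ → ℝ := fun j => sInf {t | t ∈ Icc (0:ℝ) 1 ∧ θ t = ((min j n : ℕ) : ℝ)} with hUdef
  have hS : ∀ i, S i ∈ Icc (0:ℝ) 1 ∧ σ (S i) = ((min i m : ℕ) : ℝ) := by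
    intro i
    exact reparam_hits σ 0 m ⟨hσc, hσm, hσ0, hσ1⟩ _
      ⟨Nat.cast_nonneg _, Nat.cast_le.mpr (min_le_right _ _)⟩
  have hU : ∀ j, U j ∈ Icc (0:ℝ) 1 ∧ θ (U j) = ((min j n : ℕ) : ℝ) := by
    intro j
    exact reparam_hits θ 0 n ⟨hθc, hθm, hθ0, hθ1⟩ _
      ⟨Nat.cast_nonneg _, Nat.cast_le.mpr (min_le_right _ _)⟩
  have hSmono : Monotone S := by
    intro i i' hii'
    have h1 := hS i'
    have hsub : Icc (0:ℝ) (S i') ⊆ Icc 0 1 := Icc_subset_Icc le_rfl h1.1.2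
    have h2 := intermediate_value_Icc h1.1.1 (hσc.mono hsub)
    rw [hσ0, h1.2] at h2
    have hmm : ((min i m : ℕ) : ℝ) ∈ Icc (0:ℝ) ((min i' m : ℕ) : ℝ) :=
      ⟨Nat.cast_nonneg _, Nat.cast_le.mpr (by omega)⟩
    obtain ⟨t, ht, hσt⟩ := h2 hmm
    exact le_trans (csInf_le ⟨0, fun u hu => hu.1.1⟩
      ⟨⟨ht.1, le_trans ht.2 h1.1.2⟩, hσt⟩) ht.2
  have hUmono : Monotone U := by
    intro j j' hjj'
    have h1 := hU j'
    have hsub : Icc (0:ℝ) (U j') ⊆ Icc 0 1 := Icc_subset_Icc le_rfl h1.1.2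
    have h2 := intermediate_value_Icc h1.1.1 (hθc.mono hsub)
    rw [hθ0, h1.2] at h2
    have hmm : ((min j n : ℕ) : ℝ) ∈ Icc (0:ℝ) ((min j' n : ℕ) : ℝ) :=
      ⟨Nat.cast_nonneg _, Nat.cast_le.mpr (by omega)⟩
    obtain ⟨t, ht, hθt⟩ := h2 hmm
    exact le_trans (csInf_le ⟨0, fun u hu => hu.1.1⟩
      ⟨⟨ht.1, le_trans ht.2 h1.1.2⟩, hθt⟩) ht.2
  have hS0 : S 0 = 0 := by
    refine le_antisymm (csInf_le ⟨0, fun u hu => hu.1.1⟩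
      ⟨⟨le_rfl, zero_le_one⟩, by rw [hσ0]; simp⟩) (hS 0).1.1
  have hU0 : U 0 = 0 := by
    refine le_antisymm (csInf_le ⟨0, fun u hu => hu.1.1⟩
      ⟨⟨le_rfl, zero_le_one⟩, by rw [hθ0]; simp⟩) (hU 0).1.1
  have hspec := gridSeq_spec m n S U hSmono hUmono
    (by rw [hS0]; exact (hU 1).1.1) (by rw [hU0]; exact (hS 1).1.1)
  have hpath := gridSeq_isGridPath m n S U hSmono hUmono
    (by rw [hS0]; exact (hU 1).1.1) (by rw [hU0]; exact (hS 1).1.1)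
  refine le_trans (csInf_le ⟨0, ?_⟩ ⟨m+n+1, gridSeq m n S U, hpath, rfl⟩) ?_
  · rintro r' ⟨k, π, _, rfl⟩
    exact NNReal.coe_nonneg _
  rw [show r + C = ↑((r + C).toNNReal) from (Real.coe_toNNReal _ (by linarith)).symm]
  apply NNReal.coe_le_coe.mpr
  apply Finset.sup_le
  intro l hl
  have hlmn : l ≤ m + n := by
    have := (Finset.mem_Icc.mp hl).2
    omega
  obtain ⟨hsum, him, hjn, hinv1, hinv2⟩ := hspec l hlmn
  rw [← NNReal.coe_le_coe, Real.coe_toNNReal _ (by linarith), coe_nndist]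
  set i := (gridSeq m n S U l).1 with hidef
  set j := (gridSeq m n S U l).2 with hjdef
  have hSi : σ (S i) = (i : ℝ) := by
    have h := (hS i).2
    rwa [min_eq_left him] at h
  have hUj : θ (U j) = (j : ℝ) := by
    have h := (hU j).2
    rwa [min_eq_left hjn] at h
  rcases le_total (S i) (U j) with hcase | hcase
  · -- match at time U j
    have ht0 : U j ∈ Icc (0:ℝ) 1 := (hU j).1
    have hlow : (i:ℝ) ≤ σ (U j) := by
      rw [← hSi]
      exact hσm (hS i).1 ht0 hcase
    have hup : σ (U j) ≤ (i:ℝ) + 1 := by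
      rcases Nat.lt_or_ge i m with h | h
      · have h2 := hinv2 h
        have h3 : σ (S (i+1)) = ((i+1 : ℕ) : ℝ) := by
          have hh := (hS (i+1)).2
          rwa [min_eq_left (by omega)] at hh
        calc σ (U j) ≤ σ (S (i+1)) := hσm ht0 (hS (i+1)).1 h2
          _ = ((i+1 : ℕ) : ℝ) := h3
          _ = (i:ℝ) + 1 := by push_cast; ring
      · have h4 : σ (U j) ≤ (m:ℝ) := (hσrange _ ht0).2
        have h5 : (m:ℝ) ≤ (i:ℝ) := Nat.cast_le.mpr h
        linarith
    have e1 : dist (p i) (P (σ (U j))) ≤ C := by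
      rw [dist_comm]
      refine le_trans (eval_near hP0 hP him hlow hup (hσrange _ ht0).2) ?_
      exact NNReal.coe_le_coe.mpr (le_max_left _ _)
    have e2 : dist (P (σ (U j))) (q j) ≤ r := by
      have hq : Q ((j:ℝ)) = q j := eval_int hQ0 hQ j hjn
      rw [← hq, ← hUj]
      exact hler ⟨U j, ht0⟩
    calc dist (p i) (q j) ≤ dist (p i) (P (σ (U j))) + dist (P (σ (U j))) (q j) :=
          dist_triangle _ _ _
      _ ≤ C + r := add_le_add e1 e2
      _ = r + C := by ring
  · -- match at time S i
    have ht0 : S i ∈ Icc (0:ℝ) 1 := (hS i).1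
    have hlow : (j:ℝ) ≤ θ (S i) := by
      rw [← hUj]
      exact hθm (hU j).1 ht0 hcase
    have hup : θ (S i) ≤ (j:ℝ) + 1 := by
      rcases Nat.lt_or_ge j n with h | h
      · have h2 := hinv1 h
        have h3 : θ (U (j+1)) = ((j+1 : ℕ) : ℝ) := by
          have hh := (hU (j+1)).2
          rwa [min_eq_left (by omega)] at hh
        calc θ (S i) ≤ θ (U (j+1)) := hθm ht0 (hU (j+1)).1 h2
          _ = ((j+1 : ℕ) : ℝ) := h3
          _ = (j:ℝ) + 1 := by push_cast; ring
      · have h4 : θ (S i) ≤ (n:ℝ) := (hθrange _ ht0).2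
        have h5 : (n:ℝ) ≤ (j:ℝ) := Nat.cast_le.mpr h
        linarith
    have e1 : dist (Q (θ (S i))) (q j) ≤ C := by
      refine le_trans (eval_near hQ0 hQ hjn hlow hup (hθrange _ ht0).2) ?_
      exact NNReal.coe_le_coe.mpr (le_max_right _ _)
    have e2 : dist (p i) (Q (θ (S i))) ≤ r := by
      have hp : P ((i:ℝ)) = p i := eval_int hP0 hP i him
      rw [← hp, ← hSi]
      exact hler ⟨S i, ht0⟩
    calc dist (p i) (q j) ≤ dist (p i) (Q (θ (S i))) + dist (Q (θ (S i))) (q j) :=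
          dist_triangle _ _ _
      _ ≤ r + C := add_le_add e2 e1

theorem discrete_vs_continuous_frechet {d : ℕ} (m n : ℕ)
    (p q : ℕ → EuclideanSpace ℝ (Fin d))
    (P Q : ℝ → EuclideanSpace ℝ (Fin d))
    (hP0 : P 0 = p 0) (hQ0 : Q 0 = q 0)
    (hP : ∀ i : ℕ, i < m → ∀ l ∈ Set.Icc (0:ℝ) 1,
      P (i + l) = (1 - l) • p i + l • p (i + 1))
    (hQ : ∀ j : ℕ, j < n → ∀ l ∈ Set.Icc (0:ℝ) 1,
      Q (j + l) = (1 - l) • q j + l • q (j + 1)) :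
    frechetDist P Q 0 m 0 n ≤
      sInf {r : ℝ | ∃ (k : ℕ) (π : ℕ → ℕ × ℕ),
        IsGridPath π k (0, 0) (m, n) ∧
        r = (Finset.sup (Finset.Icc 0 (k - 1))
              (fun t => nndist (p (π t).1) (q (π t).2)) : NNReal)} ∧
    sInf {r : ℝ | ∃ (k : ℕ) (π : ℕ → ℕ × ℕ),
        IsGridPath π k (0, 0) (m, n) ∧
        r = (Finset.sup (Finset.Icc 0 (k - 1))
              (fun t => nndist (p (π t).1) (q (π t).2)) : NNReal)} ≤
      frechetDist P Q 0 m 0 n +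
        (max (Finset.sup (Finset.range m) (fun i => nndist (p i) (p (i + 1))))
             (Finset.sup (Finset.range n) (fun j => nndist (q j) (q (j + 1)))) : NNReal) := by
  have hFbb : BddBelow {r | ∃ σ θ : ℝ → ℝ, IsReparamTo 0 (m:ℝ) σ ∧ IsReparamTo 0 (n:ℝ) θ ∧
      r = ⨆ t : Set.Icc (0:ℝ) 1, dist (P (σ t)) (Q (θ t))} := by
    refine ⟨0, ?_⟩
    rintro r ⟨σ, θ, _, _, rfl⟩
    exact Real.iSup_nonneg fun t => dist_nonneg
  have hFne : {r | ∃ σ θ : ℝ → ℝ, IsReparamTo 0 (m:ℝ) σ ∧ IsReparamTo 0 (n:ℝ) θ ∧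
      r = ⨆ t : Set.Icc (0:ℝ) 1, dist (P (σ t)) (Q (θ t))}.Nonempty := by
    obtain ⟨σ, θ, hσ, hθ, _⟩ := part1_core hP0 hQ0 hP hQ (m+n+1) _ (trivPath_isGridPath m n)
    exact ⟨_, σ, θ, hσ, hθ, rfl⟩
  constructor
  · apply le_csInf
    · exact ⟨_, m+n+1, (fun l => (min l m, l - min l m)), trivPath_isGridPath m n, rfl⟩
    · rintro b ⟨k, π, hpath, rfl⟩
      obtain ⟨σ, θ, hσ, hθ, hle⟩ := part1_core hP0 hQ0 hP hQ k π hpath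
      exact le_trans (csInf_le hFbb ⟨σ, θ, hσ, hθ, rfl⟩) hle
  · rw [frechetDist]
    have key : sInf {r : ℝ | ∃ (k : ℕ) (π : ℕ → ℕ × ℕ),
        IsGridPath π k (0, 0) (m, n) ∧
        r = (Finset.sup (Finset.Icc 0 (k - 1))
              (fun t => nndist (p (π t).1) (q (π t).2)) : NNReal)} -
        ((max (Finset.sup (Finset.range m) (fun i => nndist (p i) (p (i + 1))))
             (Finset.sup (Finset.range n) (fun j => nndist (q j) (q (j + 1)))) : NNReal) : ℝ) ≤
        sInf {r | ∃ σ θ : ℝ → ℝ, IsReparamTo 0 (m:ℝ) σ ∧ IsReparamTo 0 (n:ℝ) θ ∧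
          r = ⨆ t : Set.Icc (0:ℝ) 1, dist (P (σ t)) (Q (θ t))} := by
      apply le_csInf hFne
      rintro r ⟨σ, θ, hσ, hθ, rfl⟩
      have h := part2_core hP0 hQ0 hP hQ σ θ hσ hθ
      linarith
    linarith
end
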